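/- arXiv:2308.01247 — 2 statements merged into one kernel-verified Lean document; each statement's English description precedes it below -/
import Mathlib

section
/- Let α be irrational with denominators (q_n), let F : 𝕋 → ℝ have bounded variation Var(F), and let R_α(x) = x + α. Then for every n ∈ ℕ and every x ∈ 𝕋: |∑_{j=0}^{q_n−1} F(x + jα) − q_n ∫_𝕋 F dλ'| ≤ Var(F), where λ' is normalized Lebesgue measure on 𝕋. (Denjoy–Koksma inequality.) -/
/-!
Let `p/Q` be the `n`-th convergent of `α`, so `Q = q n`, `gcd(p, Q) = 1` and `|α - p/Q| ≤ 1/Q²`.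
For `j < Q` the drift `j (α - p/Q)` has size at most `1/Q`, so, after a suitable shift `y`, the
point `x + jα` lies modulo `1` in the interval `[y + r/Q, y + (r + 1)/Q]` with `r = jp mod Q`;
as `p` is invertible mod `Q`, each of these `Q` intervals receives exactly one orbit point. On each
interval, `F` at that point differs from `Q` times the integral of `F` over the interval by at most
the variation of `F` there, and these variations add up to `Var(F)`.
-/

open MeasureTheory intervalIntegral Set Function

theorem BoundedVariationOn.intervalIntegrable {f : ℝ → ℝ} {a b : ℝ}
    (hf : BoundedVariationOn f (uIcc a b)) : IntervalIntegrable f volume a b := by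
  obtain ⟨p, q, hp, hq, rfl⟩ := hf.locallyBoundedVariationOn.exists_monotoneOn_sub_monotoneOn
  exact hp.intervalIntegrable.sub hq.intervalIntegrable

theorem BoundedVariationOn.abs_mul_sub_integral_le {f : ℝ → ℝ} {a b z : ℝ} (hab : a ≤ b)
    (hf : BoundedVariationOn f (Icc a b)) (hz : z ∈ Icc a b) :
    |(b - a) * f z - ∫ t in a..b, f t| ≤ (b - a) * (eVariationOn f (Icc a b)).toReal := by
  have hint : IntervalIntegrable f volume a b := (uIcc_of_le hab ▸ hf).intervalIntegrable
  have hpoint : ∀ t ∈ uIoc a b, ‖f z - f t‖ ≤ (eVariationOn f (Icc a b)).toReal := fun t ht =>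
    hf.dist_le hz (uIoc_subset_uIcc.trans (uIcc_of_le hab).subset ht)
  have hconst : ∫ t in a..b, (f z - f t) = (b - a) * f z - ∫ t in a..b, f t := by
    rw [integral_sub intervalIntegrable_const hint, intervalIntegral.integral_const, smul_eq_mul]
  have := norm_integral_le_of_norm_le_const hpoint
  rwa [hconst, Real.norm_eq_abs, abs_of_nonneg (sub_nonneg.2 hab), mul_comm _ (b - a)] at this

namespace Function.Periodic

variable {F : ℝ → ℝ} {c : ℝ}

theorem eVariationOn_Icc_add (hF : Periodic F c) (a b : ℝ) :
    eVariationOn F (Icc (a + c) (b + c)) = eVariationOn F (Icc a b) := by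
  have hmono : MonotoneOn (· + c) (Icc a b) := (monotone_id.add_const c).monotoneOn _
  rw [← image_add_const_Icc, ← eVariationOn.comp_eq_of_monotoneOn F _ hmono]
  exact congrArg (eVariationOn · _) (funext hF)

theorem eVariationOn_Icc_add_period (hF : Periodic F c) (hc : 0 < c) (y : ℝ) :
    eVariationOn F (Icc y (y + c)) = eVariationOn F (Icc 0 c) := by
  set m := ⌈y / c⌉
  have hym : y ≤ m * c := (div_le_iff₀ hc).1 (Int.le_ceil _)
  have hmy : m * c ≤ y + c := by
    have := (lt_div_iff₀ hc).1 (sub_lt_iff_lt_add.2 (Int.ceil_lt_add_one (y / c)))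
    nlinarith
  set t := y + c - m * c
  have hleft : eVariationOn F (Icc y (m * c)) = eVariationOn F (Icc t c) := by
    convert (hF.int_mul (m - 1)).eVariationOn_Icc_add t c using 3 <;> push_cast <;> ring
  have hright : eVariationOn F (Icc (m * c) (y + c)) = eVariationOn F (Icc 0 t) := by
    convert (hF.int_mul m).eVariationOn_Icc_add 0 t using 3 <;> ring
  have hsplit_y := eVariationOn.Icc_add_Icc F hym hmy (mem_univ _)
  have hsplit_t := eVariationOn.Icc_add_Icc F (a := 0) (b := t) (c := c)
    (sub_nonneg.2 hmy) (by linarith) (mem_univ t)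
  simp only [univ_inter] at hsplit_y hsplit_t
  rw [← hsplit_y, ← hsplit_t, hleft, hright, add_comm]

theorem boundedVariationOn_Icc (hF : Periodic F c) (hc : 0 < c)
    (hBV : BoundedVariationOn F (Icc 0 c)) {a b : ℝ} (hba : b ≤ a + c) :
    BoundedVariationOn F (Icc a b) :=
  ne_top_of_le_ne_top hBV <| (hF.eVariationOn_Icc_add_period hc a).le.trans'
    (eVariationOn.mono F (Icc_subset_Icc le_rfl hba))

theorem abs_sum_sub_mul_integral_le (hF : Periodic F 1) (hBV : BoundedVariationOn F (Icc 0 1))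
    {Q : ℕ} (hQ : 0 < Q) {σ : ℕ → ℕ} (hσ : BijOn σ (Finset.range Q) (Finset.range Q)) (y : ℝ)
    {z : ℕ → ℝ} (hz : ∀ j < Q, ∃ m : ℤ, z j + m ∈ Icc (y + σ j / Q) (y + (σ j + 1) / Q)) :
    |∑ j ∈ Finset.range Q, F (z j) - Q * ∫ t in (0 : ℝ)..1, F t| ≤
      (eVariationOn F (Icc 0 1)).toReal := by
  have hQ' : (0 : ℝ) < Q := Nat.cast_pos.2 hQ
  set a : ℕ → ℝ := fun k => y + k / Q
  have ha : Monotone a := fun k l hkl => by simp only [a]; gcongr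
  have ha_succ : ∀ k : ℕ, a (k + 1) = y + (k + 1) / Q := fun k => by
    simp only [a]; push_cast; ring
  have hlen : ∀ k, a (k + 1) - a k = 1 / Q := fun k => by rw [ha_succ]; ring
  have ha_Q : a Q = a 0 + 1 := by simp [a, hQ'.ne']
  have hBV_piece : ∀ k, BoundedVariationOn F (Icc (a k) (a (k + 1))) := fun k =>
    hF.boundedVariationOn_Icc one_pos hBV
      (by linarith [hlen k, (div_le_one hQ').2 (Nat.one_le_cast.2 hQ)])
  have reindex : ∀ g : ℕ → ℝ, ∑ j ∈ Finset.range Q, g (σ j) = ∑ k ∈ Finset.range Q, g k :=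
    fun g => Finset.sum_nbij σ (fun _ hj => hσ.mapsTo hj) hσ.injOn hσ.surjOn fun _ _ => rfl
  have hintegral :
      ∑ k ∈ Finset.range Q, ∫ t in a k..a (k + 1), F t = ∫ t in (0 : ℝ)..1, F t := by
    rw [sum_integral_adjacent_intervals fun k _ =>
      (uIcc_of_le (ha k.le_succ) ▸ hBV_piece k).intervalIntegrable, ha_Q]
    simpa using hF.intervalIntegral_add_eq (a 0) 0
  have hvariation : ∑ k ∈ Finset.range Q, eVariationOn F (Icc (a k) (a (k + 1))) =
      eVariationOn F (Icc 0 1) := by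
    rw [eVariationOn.sum' F ha, ha_Q, hF.eVariationOn_Icc_add_period one_pos]
  have hpiece : ∀ j ∈ Finset.range Q,
      |F (z j) - Q * ∫ t in a (σ j)..a (σ j + 1), F t| ≤
        (eVariationOn F (Icc (a (σ j)) (a (σ j + 1)))).toReal := by
    intro j hj
    obtain ⟨m, hm⟩ := hz j (Finset.mem_range.1 hj)
    rw [← ha_succ] at hm
    have hFm : F (z j + m) = F (z j) := by simpa using hF.int_mul m (z j)
    have hmean := (hBV_piece (σ j)).abs_mul_sub_integral_le (ha (σ j).le_succ) hm
    rw [hlen, hFm] at hmean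
    calc |F (z j) - Q * ∫ t in a (σ j)..a (σ j + 1), F t|
        = Q * |1 / Q * F (z j) - ∫ t in a (σ j)..a (σ j + 1), F t| := by
          rw [← abs_of_pos hQ', ← abs_mul, abs_of_pos hQ']
          field_simp
      _ ≤ Q * (1 / Q * (eVariationOn F (Icc (a (σ j)) (a (σ j + 1)))).toReal) := by gcongr
      _ = (eVariationOn F (Icc (a (σ j)) (a (σ j + 1)))).toReal := by field_simp
  calc |∑ j ∈ Finset.range Q, F (z j) - Q * ∫ t in (0 : ℝ)..1, F t|
      = |∑ j ∈ Finset.range Q, (F (z j) - Q * ∫ t in a (σ j)..a (σ j + 1), F t)| := by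
        rw [Finset.sum_sub_distrib, ← Finset.mul_sum, ← hintegral,
          reindex fun k => ∫ t in a k..a (k + 1), F t]
    _ ≤ ∑ j ∈ Finset.range Q, |F (z j) - Q * ∫ t in a (σ j)..a (σ j + 1), F t| :=
        Finset.abs_sum_le_sum_abs _ _
    _ ≤ ∑ j ∈ Finset.range Q, (eVariationOn F (Icc (a (σ j)) (a (σ j + 1)))).toReal :=
        Finset.sum_le_sum hpiece
    _ = ∑ k ∈ Finset.range Q, (eVariationOn F (Icc (a k) (a (k + 1)))).toReal :=
        reindex fun k => (eVariationOn F (Icc (a k) (a (k + 1)))).toReal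
    _ = (eVariationOn F (Icc 0 1)).toReal := by
        rw [← ENNReal.toReal_sum fun k _ => hBV_piece k, hvariation]

end Function.Periodic

theorem bijOn_toNat_mul_emod {Q : ℕ} {p : ℤ} (h : IsCoprime (Q : ℤ) p) :
    BijOn (fun j : ℕ => (j * p % Q).toNat) (Finset.range Q) (Finset.range Q) := by
  have hrem : ∀ j : ℕ, j < Q → 0 ≤ (j * p % Q : ℤ) ∧ (j * p % Q : ℤ) < Q := fun j hj =>
    ⟨Int.emod_nonneg _ (by omega), Int.emod_lt_of_pos _ (by omega)⟩
  have hmaps : MapsTo (fun j : ℕ => (j * p % Q).toNat) (Finset.range Q) (Finset.range Q) :=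
    fun j hj => by
      simp only [Finset.coe_range, mem_Iio] at hj ⊢
      have := hrem j hj
      omega
  refine (Finset.finite_toSet _).injOn_iff_bijOn_of_mapsTo hmaps |>.1 fun i hi j hj hij => ?_
  simp only [Finset.coe_range, mem_Iio] at hi hj hij
  have hmod : (i : ℤ) * p ≡ j * p [ZMOD Q] := by
    have := hrem i hi; have := hrem j hj
    change _ % _ = _ % _; omega
  have hdvd : (Q : ℤ) ∣ (j - i : ℤ) :=
    h.dvd_of_dvd_mul_right (by simpa [sub_mul] using hmod.dvd)
  have := Int.eq_zero_of_abs_lt_dvd hdvd (by rw [abs_lt]; omega)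
  omega

theorem exists_forall_natCast_mul_mem_Icc {Q : ℕ} {δ : ℝ} (hδ : |δ| ≤ 1 / Q ^ 2) :
    ∃ y : ℝ, ∀ j < Q, (j : ℝ) * δ ∈ Icc y (y + 1 / Q) := by
  have hsmall : ∀ j < Q, (j : ℝ) * |δ| ≤ 1 / Q := fun j hj => by
    have hQ : (0 : ℝ) < Q := by exact_mod_cast (j.zero_le.trans_lt hj)
    calc (j : ℝ) * |δ| ≤ Q * (1 / Q ^ 2) := by gcongr
      _ = 1 / Q := by field_simp
  rcases le_or_gt 0 δ with hpos | hneg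
  · refine ⟨0, fun j hj => ⟨by positivity, ?_⟩⟩
    simpa [abs_of_nonneg hpos] using hsmall j hj
  · refine ⟨-(1 / Q), fun j hj => ⟨?_, ?_⟩⟩
    · have := hsmall j hj
      rw [abs_of_neg hneg] at this
      linarith
    · simpa using mul_nonpos_of_nonneg_of_nonpos j.cast_nonneg hneg.le

theorem exists_forall_add_int_mem_Icc {Q : ℕ} {α : ℝ} {p : ℤ} (hα : |α - p / Q| ≤ 1 / Q ^ 2)
    (x : ℝ) : ∃ y : ℝ, ∀ j < Q, ∃ m : ℤ, x + j * α + m ∈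
      Icc (y + (j * p % Q).toNat / Q) (y + ((j * p % Q).toNat + 1) / Q) := by
  obtain ⟨y, hy⟩ := exists_forall_natCast_mul_mem_Icc hα
  refine ⟨x + y, fun j hj => ⟨-(j * p / Q), ?_⟩⟩
  have hQ : (Q : ℝ) ≠ 0 := by exact_mod_cast (j.zero_le.trans_lt hj).ne'
  have hrem : ((j * p % Q).toNat : ℝ) = ((j * p % Q : ℤ) : ℝ) := by
    rw [← Int.cast_natCast, Int.toNat_of_nonneg (Int.emod_nonneg _ (by omega))]
  have hdiv : ((j * p % Q : ℤ) : ℝ) + Q * ((j * p / Q : ℤ) : ℝ) = j * p := by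
    exact_mod_cast Int.emod_add_mul_ediv (j * p) Q
  have hpoint : x + j * α + ((-(j * p / Q) : ℤ) : ℝ) =
      x + (j * p % Q).toNat / Q + j * (α - p / Q) := by
    rw [hrem]
    field_simp
    push_cast
    linear_combination -hdiv
  obtain ⟨hlo, hhi⟩ := hy j hj
  rw [hpoint, mem_Icc, add_div _ 1]
  constructor <;> linarith

namespace GenContFract

variable {K : Type*} [Field K] [LinearOrder K] [FloorRing K] (v : K)

theorem exists_int_eq_contsAux (n : ℕ) :
    ∃ a b : ℤ, (GenContFract.of v).contsAux n = ⟨a, b⟩ := by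
  induction n using Nat.twoStepInduction with
  | zero => exact ⟨1, 0, by simp [zeroth_contAux_eq_one_zero]⟩
  | one => exact ⟨⌊v⌋, 1, by simp [first_contAux_eq_h_one, of_h_eq_floor]⟩
  | more n ih₀ ih₁ =>
    obtain ⟨a₀, b₀, h₀⟩ := ih₀
    obtain ⟨a₁, b₁, h₁⟩ := ih₁
    rcases hs : (GenContFract.of v).s.get? n with _ | gp
    · exact ⟨a₁, b₁, (contsAux_stable_step_of_terminated hs).trans h₁⟩
    · obtain ⟨c, hc⟩ := exists_int_eq_of_partDen (partDen_eq_s_b hs)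
      have ha : gp.a = 1 := of_partNum_eq_one (partNum_eq_s_a hs)
      refine ⟨c * a₁ + a₀, c * b₁ + b₀, ?_⟩
      rw [contsAux_recurrence hs h₀ h₁, ha, hc]
      push_cast
      ring_nf

theorem exists_int_eq_nums (n : ℕ) : ∃ a : ℤ, (GenContFract.of v).nums n = a := by
  obtain ⟨a, b, h⟩ := exists_int_eq_contsAux v (n + 1)
  exact ⟨a, by rw [num_eq_conts_a, nth_cont_eq_succ_nth_contAux, h]⟩

theorem exists_int_eq_dens (n : ℕ) : ∃ b : ℤ, (GenContFract.of v).dens n = b := by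
  obtain ⟨a, b, h⟩ := exists_int_eq_contsAux v (n + 1)
  exact ⟨b, by rw [den_eq_conts_b, nth_cont_eq_succ_nth_contAux, h]⟩

end GenContFract

theorem Irrational.genContFract_of_not_terminatedAt {α : ℝ} (hα : Irrational α) (n : ℕ) :
    ¬(GenContFract.of α).TerminatedAt n := fun h => by
  obtain ⟨q, hq⟩ := (GenContFract.terminates_iff_rat α).1 ⟨n, h⟩
  exact hα ⟨q, hq.symm⟩

theorem Irrational.exists_isCoprime_abs_sub_div_le {α : ℝ} (hα : Irrational α) (n : ℕ) {Q : ℕ}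
    (hQ : (Q : ℝ) = (GenContFract.of α).dens n) :
    0 < Q ∧ ∃ p : ℤ, IsCoprime (Q : ℤ) p ∧ |α - p / Q| ≤ 1 / Q ^ 2 := by
  have hden_mono : Monotone (GenContFract.of α).dens :=
    monotone_nat_of_le_succ fun _ => GenContFract.of_den_mono
  have hQ_one : (1 : ℝ) ≤ Q := by
    rw [hQ, ← GenContFract.zeroth_den_eq_one]; exact hden_mono n.zero_le
  obtain ⟨p, hp⟩ := GenContFract.exists_int_eq_nums α n
  obtain ⟨A, hA⟩ := GenContFract.exists_int_eq_nums α (n + 1)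
  obtain ⟨B, hB⟩ := GenContFract.exists_int_eq_dens α (n + 1)
  refine ⟨Nat.one_le_cast.1 hQ_one, p, ?_, ?_⟩
  · have hdet : p * B - Q * A = (-1 : ℤ) ^ (n + 1) := by
      have hdetR : (GenContFract.of α).nums n * (GenContFract.of α).dens (n + 1) -
          (GenContFract.of α).dens n * (GenContFract.of α).nums (n + 1) = (-1) ^ (n + 1) :=
        SimpContFract.determinant (s := (ContFract.of α : SimpContFract ℝ))
          (hα.genContFract_of_not_terminatedAt n)
      rw [hp, hA, hB, ← hQ] at hdetR
      exact_mod_cast hdetR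
    have hsq : ((-1 : ℤ) ^ (n + 1)) * (-1) ^ (n + 1) = 1 := by rw [← mul_pow]; norm_num
    exact ⟨-((-1) ^ (n + 1) * A), (-1) ^ (n + 1) * B,
      by linear_combination (-1 : ℤ) ^ (n + 1) * hdet + hsq⟩
  · have happrox := GenContFract.abs_sub_convs_le (hα.genContFract_of_not_terminatedAt n)
    rw [GenContFract.conv_eq_num_div_den, hp, ← hQ] at happrox
    refine happrox.trans (one_div_le_one_div_of_le (by positivity) ?_)
    rw [sq, hQ]
    exact mul_le_mul_of_nonneg_left (hden_mono n.le_succ) (hQ ▸ by positivity)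

theorem stmt6 (α : ℝ) (hα : Irrational α) (q : ℕ → ℕ)
    (hq : ∀ m, ((q m : ℝ)) = (GenContFract.of α).dens m)
    (F : ℝ → ℝ) (hper : Function.Periodic F 1)
    (hBV : BoundedVariationOn F (Set.Icc 0 1))
    (n : ℕ) (x : ℝ) :
    |(∑ j ∈ Finset.range (q n), F (x + (j : ℝ) * α)) -
        (q n : ℝ) * ∫ t in (0:ℝ)..1, F t| ≤
      (eVariationOn F (Set.Icc 0 1)).toReal := by
  obtain ⟨hQ, p, hcoprime, happrox⟩ := hα.exists_isCoprime_abs_sub_div_le n (hq n)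
  obtain ⟨y, hy⟩ := exists_forall_add_int_mem_Icc happrox x
  exact hper.abs_sum_sub_mul_integral_le hBV hQ (bijOn_toNat_mul_emod hcoprime) y hy
end

section
/- With the recursive sets U_{α,m}, V_{α,m} as above, the symmetric difference satisfies U_{α,m} △ U_{α,m−1} = ⋃_{i=0}^{q_{n_m}−1} T_{α,m−1}^i(J'_{α,m}), and hence, since the tower floors are pairwise disjoint, λ(U_{α,m} △ U_{α,m−1}) = q_{n_m}‖q_{n_m}α‖, which lies strictly between 1/(a_{n_m+1}+2) and 1/a_{n_m+1}. -/
open MeasureTheory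
open scoped Classical symmDiff


open MeasureTheory
open scoped Classical

/-- `nrm r` is the distance from the real number `r` to the nearest integer. -/
noncomputable def nrm (r : ℝ) : ℝ := ‖((r : ℝ) : AddCircle (1:ℝ))‖

/-- The interval `J^s_α = [0, 2∑_{k=1}^s ‖q_{n_k}α‖ mod 1)` in the circle. -/
noncomputable def Jas (α : ℝ) (q n : ℕ → ℕ) (s : ℕ) : Set (AddCircle (1:ℝ)) :=
  (fun t : ℝ => (t : AddCircle (1:ℝ))) ''
    Set.Ico 0 (Int.fract (2 * ∑ k ∈ Finset.Icc 1 s, nrm ((q (n k) : ℝ) * α)))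

/-- The approximating skew product `T_{α,s}(x,j) = (x+α, j + χ_{J^s_α}(x+α))`
(for `s = 0` this is the rotation times the identity). -/
noncomputable def Tas (α : ℝ) (q n : ℕ → ℕ) (s : ℕ)
    (p : AddCircle (1:ℝ) × ZMod 2) : AddCircle (1:ℝ) × ZMod 2 :=
  (p.1 + (α : AddCircle (1:ℝ)),
   p.2 + (if p.1 + (α : AddCircle (1:ℝ)) ∈ Jas α q n s then 1 else 0))

/-- `J'_{α,m} = [2∑_{s=0}^{m−1} q_{n_s}α, 2∑_{s=0}^{m−1} q_{n_s}α + q_{n_m}α) × ℤ₂`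
(with the convention `q_{n_0} = 0`, and with the interval taken mod 1, of length
`‖q_{n_m}α‖`). -/
noncomputable def J'as (α : ℝ) (q n : ℕ → ℕ) (m : ℕ) :
    Set (AddCircle (1:ℝ) × ZMod 2) :=
  ((fun t : ℝ => (t : AddCircle (1:ℝ))) ''
      Set.Ico (2 * ∑ s ∈ Finset.Icc 1 (m - 1), (q (n s) : ℝ) * α)
        (2 * ∑ s ∈ Finset.Icc 1 (m - 1), (q (n s) : ℝ) * α + nrm ((q (n m) : ℝ) * α))) ×ˢ
    (Set.univ : Set (ZMod 2))

/-- The tower `A_m = ⋃_{i=0}^{q_{n_m}−1} T_{α,m−1}^i(J'_{α,m})`. -/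
noncomputable def Aas (α : ℝ) (q n : ℕ → ℕ) (m : ℕ) :
    Set (AddCircle (1:ℝ) × ZMod 2) :=
  ⋃ i ∈ Finset.range (q (n m)), (Tas α q n (m - 1))^[i] '' J'as α q n m

/-- The recursively defined pair `(U_{α,m}, V_{α,m})`: starting from
`U_{α,0} = 𝕋×{0}`, `V_{α,0} = 𝕋×{1}`, and exchanging the parts lying in the tower `A_m`. -/
noncomputable def UVas (α : ℝ) (q n : ℕ → ℕ) :
    ℕ → Set (AddCircle (1:ℝ) × ZMod 2) × Set (AddCircle (1:ℝ) × ZMod 2)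
  | 0 => ((Set.univ : Set (AddCircle (1:ℝ))) ×ˢ ({0} : Set (ZMod 2)),
          (Set.univ : Set (AddCircle (1:ℝ))) ×ˢ ({1} : Set (ZMod 2)))
  | (m + 1) =>
      ((((UVas α q n m).1 \ Aas α q n (m + 1)) ∪ ((UVas α q n m).2 ∩ Aas α q n (m + 1))),
       (((UVas α q n m).2 \ Aas α q n (m + 1)) ∪ ((UVas α q n m).1 ∩ Aas α q n (m + 1))))

noncomputable def Uas (α : ℝ) (q n : ℕ → ℕ) (m : ℕ) : Set (AddCircle (1:ℝ) × ZMod 2) :=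
  (UVas α q n m).1

noncomputable def Vas (α : ℝ) (q n : ℕ → ℕ) (m : ℕ) : Set (AddCircle (1:ℝ) × ZMod 2) :=
  (UVas α q n m).2

/-- Normalized Lebesgue measure `λ = λ' ⊗ (δ₀+δ₁)/2` on `𝕋 × ℤ₂`. -/
noncomputable def lam2 : Measure (AddCircle (1:ℝ) × ZMod 2) :=
  (volume : Measure (AddCircle (1:ℝ))).prod
    ((2 : ENNReal)⁻¹ • (Measure.dirac (0 : ZMod 2) + Measure.dirac (1 : ZMod 2)))

/-!
Since `V_{α,m}` is always the complement of `U_{α,m}`, the exchange step makes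
`U_{α,m+1} = U_{α,m} ∆ A_{m+1}`. The skew product moves the fibres `{x} × ℤ₂` rigidly by `α`, so
the `i`-th floor of the tower `A_{m+1}` is the arc `c + iα + [0, ‖q_N α‖)` times `ℤ₂`
(`N = n_{m+1}`). These `q_N` arcs are pairwise disjoint because `q_N` is a best approximation
denominator: `‖kα‖ ≥ ‖q_N α‖` for `0 < k < q_N`. The bounds follow from
`q_N α - p_N = ±1/D` with `q_{N+1} < D < q_{N+1} + q_N`.
-/

open Set

lemma abs_le_abs_intCast_mul_add {e' e : ℝ} {x y : ℤ} (hxy : x * y ≤ 0) (hne : x ≠ 0 ∨ y ≠ 0)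
    (hsign : e' * e ≤ 0) (habs : |e| ≤ |e'|) : |e| ≤ |x * e' + y * e| := by
  have hsame : 0 ≤ (x * e') * (y * e) := by
    have : ((x * y : ℤ) : ℝ) ≤ 0 := by exact_mod_cast hxy
    push_cast at this
    nlinarith
  have hsplit : |x * e' + y * e| = |x * e'| + |y * e| :=
    (abs_add_eq_add_abs_iff _ _).mpr (mul_nonneg_iff.mp hsame)
  rw [hsplit, abs_mul, abs_mul]
  rcases hne with hx | hy
  · have : (1 : ℝ) ≤ |(x : ℝ)| := by exact_mod_cast Int.one_le_abs hx
    nlinarith [abs_nonneg (y : ℝ), abs_nonneg e, abs_nonneg e']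
  · have : (1 : ℝ) ≤ |(y : ℝ)| := by exact_mod_cast Int.one_le_abs hy
    nlinarith [abs_nonneg (x : ℝ), abs_nonneg e, abs_nonneg e']

-- As the determinant is a unit, `(k, l) = x (q', p') + y (q, p)` with integers `x, y`, and
-- `0 < k < q` forces `x y ≤ 0`.
lemma abs_mul_sub_le_of_isUnit_det {α : ℝ} {q' q p' p k l : ℤ} (hdet : IsUnit (p' * q - q' * p))
    (hq' : 0 ≤ q') (hk : 0 < k) (hkq : k < q)
    (hsign : (q' * α - p') * (q * α - p) ≤ 0) (habs : |q * α - p| ≤ |q' * α - p'|) :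
    |q * α - p| ≤ |k * α - l| := by
  obtain ⟨d, hd⟩ : ∃ d, p' * q - q' * p = d := ⟨_, rfl⟩
  have hdd : d * d = 1 := Int.isUnit_mul_self (hd ▸ hdet)
  set x := d * (q * l - k * p)
  set y := d * (p' * k - q' * l)
  have hkxy : k = x * q' + y * q := by linear_combination (-k) * hdd - d * k * hd
  have hlxy : l = x * p' + y * p := by linear_combination (-l) * hdd - d * l * hd
  have hxy : x * y ≤ 0 := by
    by_contra! h
    rcases lt_or_gt_of_ne (left_ne_zero_of_mul h.ne') with hx | hx
    · have hy : y < 0 := neg_of_mul_pos_right h hx.le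
      nlinarith
    · have hy : 0 < y := pos_of_mul_pos_right h hx.le
      nlinarith
  have hne : x ≠ 0 ∨ y ≠ 0 := by
    by_contra! h
    rw [h.1, h.2] at hkxy
    omega
  have hdecomp : (k : ℝ) * α - l = x * (q' * α - p') + y * (q * α - p) := by
    rw [hkxy, hlxy]; push_cast; ring
  rw [hdecomp]
  exact abs_le_abs_intCast_mul_add hxy hne hsign habs

open GenContFract (of)

namespace GenContFract

variable {v : ℝ}

lemma not_terminatedAt_of_irrational (hv : Irrational v) (n : ℕ) : ¬(of v).TerminatedAt n :=
  fun h => hv <| by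
    obtain ⟨r, hr⟩ := (terminates_iff_rat v).mp ⟨n, h⟩
    exact ⟨r, hr.symm⟩

lemma exists_s_get?_eq_of_irrational (hv : Irrational v) (n : ℕ) :
    ∃ b : ℤ, 1 ≤ b ∧ (of v).s.get? n = some ⟨1, b⟩ := by
  obtain ⟨gp, hgp⟩ := Option.ne_none_iff_exists'.mp (not_terminatedAt_of_irrational hv n)
  obtain ⟨ha, b, hb⟩ := of_partNum_eq_one_and_exists_int_partDen_eq hgp
  have h1 : (1 : ℝ) ≤ b := hb ▸ of_one_le_get?_partDen (partDen_eq_s_b hgp)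
  exact ⟨b, by exact_mod_cast h1, by rw [hgp, ← ha, ← hb]⟩

lemma exists_stream_eq_of_irrational (hv : Irrational v) (n : ℕ) :
    ∃ ifp, IntFractPair.stream v n = some ifp ∧ ifp.fr ≠ 0 ∧ Int.fract ifp.fr⁻¹ ≠ 0 := by
  obtain ⟨p₂, h₂⟩ := Option.ne_none_iff_exists'.mp <|
    of_terminatedAt_n_iff_succ_nth_intFractPair_stream_eq_none.not.mp
      (not_terminatedAt_of_irrational hv (n + 1))
  obtain ⟨p₁, h₁, hfr₁, rfl⟩ := IntFractPair.succ_nth_stream_eq_some_iff.mp h₂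
  obtain ⟨p₀, h₀, hfr₀, rfl⟩ := IntFractPair.succ_nth_stream_eq_some_iff.mp h₁
  exact ⟨p₀, h₀, hfr₀, hfr₁⟩

lemma one_le_dens {K : Type*} [Field K] [LinearOrder K] [IsStrictOrderedRing K] [FloorRing K]
    (v : K) (n : ℕ) : 1 ≤ (of v).dens n := by
  induction n with
  | zero => rw [zeroth_den_eq_one]
  | succ n ih => exact ih.trans of_den_mono

lemma dens_add_dens_le (hv : Irrational v) (n : ℕ) :
    (of v).dens n + (of v).dens (n + 1) ≤ (of v).dens (n + 2) := by
  obtain ⟨b, hb, hs⟩ := exists_s_get?_eq_of_irrational hv (n + 1)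
  rw [dens_recurrence hs rfl rfl]
  have : (1 : ℝ) ≤ b := by exact_mod_cast hb
  nlinarith [one_le_dens v (n + 1)]

lemma exists_int_eq_nums_dens (hv : Irrational v) (n : ℕ) :
    ∃ p q : ℤ, (of v).nums n = p ∧ (of v).dens n = q := by
  suffices ∀ n, (∃ p q : ℤ, (of v).nums n = p ∧ (of v).dens n = q) ∧
      ∃ p q : ℤ, (of v).nums (n + 1) = p ∧ (of v).dens (n + 1) = q from (this n).1
  intro n
  induction n with
  | zero =>
    obtain ⟨b, -, hs⟩ := exists_s_get?_eq_of_irrational hv 0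
    refine ⟨⟨⌊v⌋, 1, by rw [zeroth_num_eq_h, of_h_eq_floor], by simp [zeroth_den_eq_one]⟩,
      b * ⌊v⌋ + 1, b, ?_, ?_⟩
    · rw [first_num_eq hs, of_h_eq_floor]; push_cast; rfl
    · rw [first_den_eq hs]
  | succ n ih =>
    obtain ⟨⟨p₀, q₀, hp₀, hq₀⟩, ⟨p₁, q₁, hp₁, hq₁⟩⟩ := ih
    obtain ⟨b, -, hs⟩ := exists_s_get?_eq_of_irrational hv (n + 1)
    refine ⟨⟨p₁, q₁, hp₁, hq₁⟩, b * p₁ + p₀, b * q₁ + q₀, ?_, ?_⟩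
    · rw [nums_recurrence hs hp₀ hp₁]; push_cast; ring
    · rw [dens_recurrence hs hq₀ hq₁]; push_cast; ring

lemma exists_dens_mul_sub_nums_eq (hv : Irrational v) (n : ℕ) :
    ∃ D, (of v).dens (n + 1) < D ∧ D < (of v).dens (n + 1) + (of v).dens n ∧
      (of v).dens n * v - (of v).nums n = (-1) ^ n / D := by
  -- `D = ξ q_n + q_{n-1}` for the complete quotient `ξ = ifp.fr⁻¹`, while
  -- `q_{n+1} = ⌊ξ⌋ q_n + q_{n-1}`; here `q_{n-1}` is `((of v).contsAux n).b`.
  obtain ⟨ifp, hs, hfr, hfract⟩ := exists_stream_eq_of_irrational hv n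
  have hsub := sub_convs_eq hs
  simp only [hfr, if_false] at hsub
  have hrec := contsAux_recurrence (get?_of_eq_some_of_get?_intFractPair_stream_fr_ne_zero hs hfr)
    rfl rfl
  have hB : 0 < (of v).dens n := one_pos.trans_le (one_le_dens v n)
  have hpB : 0 ≤ ((of v).contsAux n).b := zero_le_of_contsAux_b
  have hden : (of v).dens (n + 1) = ⌊ifp.fr⁻¹⌋ * (of v).dens n + ((of v).contsAux n).b := by
    rw [den_eq_conts_b, nth_cont_eq_succ_nth_contAux, hrec]
    simp only [one_mul]; rfl
  have hfloor : (⌊ifp.fr⁻¹⌋ : ℝ) < ifp.fr⁻¹ :=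
    lt_of_le_of_ne (Int.floor_le _) fun h => hfract (by rw [← h, Int.fract_intCast])
  have hceil : ifp.fr⁻¹ < ⌊ifp.fr⁻¹⌋ + 1 := Int.lt_floor_add_one _
  refine ⟨ifp.fr⁻¹ * (of v).dens n + ((of v).contsAux n).b, ?_, ?_, ?_⟩
  · rw [hden]; nlinarith
  · rw [hden]; nlinarith
  · have hB' : ((of v).contsAux (n + 1)).b = (of v).dens n := rfl
    rw [conv_eq_num_div_den, hB'] at hsub
    have hD : 0 < ifp.fr⁻¹ * (of v).dens n + ((of v).contsAux n).b := by
      have : 0 < ifp.fr⁻¹ :=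
        inv_pos.mpr (lt_of_le_of_ne (IntFractPair.nth_stream_fr_nonneg hs) hfr.symm)
      positivity
    calc (of v).dens n * v - (of v).nums n
          = (of v).dens n * (v - (of v).nums n / (of v).dens n) := by field_simp
      _ = _ := by rw [hsub]; field_simp

lemma abs_dens_mul_sub_nums_bounds (hv : Irrational v) (n : ℕ) :
    1 / ((of v).dens (n + 1) + (of v).dens n) < |(of v).dens n * v - (of v).nums n| ∧
      |(of v).dens n * v - (of v).nums n| < 1 / (of v).dens (n + 1) := by
  obtain ⟨D, hlo, hhi, hε⟩ := exists_dens_mul_sub_nums_eq hv n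
  have hD : 0 < D := (one_pos.trans_le (one_le_dens v _)).trans hlo
  rw [hε, abs_div, abs_pow, abs_neg, abs_one, one_pow, abs_of_pos hD]
  exact ⟨one_div_lt_one_div_of_lt hD hhi,
    one_div_lt_one_div_of_lt (one_pos.trans_le (one_le_dens v _)) hlo⟩

lemma dens_mul_sub_nums_mul_succ_neg (hv : Irrational v) (n : ℕ) :
    ((of v).dens n * v - (of v).nums n) *
      ((of v).dens (n + 1) * v - (of v).nums (n + 1)) < 0 := by
  obtain ⟨D, hlo, -, hε⟩ := exists_dens_mul_sub_nums_eq hv n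
  obtain ⟨D', hlo', -, hε'⟩ := exists_dens_mul_sub_nums_eq hv (n + 1)
  have hD : 0 < D := (one_pos.trans_le (one_le_dens v _)).trans hlo
  have hD' : 0 < D' := (one_pos.trans_le (one_le_dens v _)).trans hlo'
  have hsq : ((-1 : ℝ) ^ n) ^ 2 = 1 := by rw [← pow_mul, pow_mul']; simp
  rw [hε, hε', div_mul_div_comm, pow_succ, ← mul_assoc, ← sq, hsq]
  exact div_neg_of_neg_of_pos (by norm_num) (mul_pos hD hD')

lemma abs_dens_mul_sub_nums_succ_le (hv : Irrational v) (n : ℕ) :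
    |(of v).dens (n + 1) * v - (of v).nums (n + 1)| ≤ |(of v).dens n * v - (of v).nums n| := by
  have h₁ := (abs_dens_mul_sub_nums_bounds hv (n + 1)).2
  have h₀ := (abs_dens_mul_sub_nums_bounds hv n).1
  have : 1 / (of v).dens (n + 2) ≤ 1 / ((of v).dens (n + 1) + (of v).dens n) :=
    one_div_le_one_div_of_le (by linarith [one_le_dens v n, one_le_dens v (n + 1)])
      (by linarith [dens_add_dens_le hv n])
  linarith

end GenContFract

lemma nrm_eq_abs_sub_round (r : ℝ) : nrm r = |r - round r| := by
  rw [nrm, AddCircle.norm_eq]; norm_num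

lemma nrm_le_abs_sub_intCast (r : ℝ) (z : ℤ) : nrm r ≤ |r - z| :=
  (nrm_eq_abs_sub_round r).trans_le (round_le r z)

lemma nrm_eq_abs_sub_intCast {r : ℝ} {z : ℤ} (h : |r - z| ≤ 1 / 2) : nrm r = |r - z| := by
  have hz : ((z : ℝ) : AddCircle (1 : ℝ)) = 0 := (AddCircle.coe_eq_zero_iff 1).mpr ⟨z, by simp⟩
  have : nrm r = nrm (r - z) := by rw [nrm, nrm, AddCircle.coe_sub, hz, sub_zero]
  rw [this, nrm, AddCircle.norm_coe_eq_abs_iff 1 one_ne_zero]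
  simpa using h

lemma nrm_le_one_half (r : ℝ) : nrm r ≤ 1 / 2 := by
  simpa [nrm] using AddCircle.norm_le_half_period 1 (x := (r : AddCircle (1 : ℝ))) one_ne_zero

section ContFract

variable {v : ℝ}

lemma nrm_dens_mul_eq (hv : Irrational v) (n : ℕ) :
    nrm ((of v).dens (n + 1) * v) = |(of v).dens (n + 1) * v - (of v).nums (n + 1)| := by
  obtain ⟨p, -, hp, -⟩ := GenContFract.exists_int_eq_nums_dens hv (n + 1)
  rw [hp]
  apply nrm_eq_abs_sub_intCast
  rw [← hp]
  have h₂ : 2 ≤ (of v).dens (n + 2) := by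
    linarith [GenContFract.dens_add_dens_le hv n, GenContFract.one_le_dens v n,
      GenContFract.one_le_dens v (n + 1)]
  calc _ ≤ 1 / (of v).dens (n + 2) := (GenContFract.abs_dens_mul_sub_nums_bounds hv _).2.le
    _ ≤ 1 / 2 := one_div_le_one_div_of_le two_pos h₂

lemma nrm_dens_mul_le_nrm_mul (hv : Irrational v) (n : ℕ) {k : ℕ} (hk : 0 < k)
    (hkq : (k : ℝ) < (of v).dens (n + 1)) : nrm ((of v).dens (n + 1) * v) ≤ nrm (k * v) := by
  rw [nrm_dens_mul_eq hv, nrm_eq_abs_sub_round (k * v)]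
  have hsign := (GenContFract.dens_mul_sub_nums_mul_succ_neg hv n).le
  have habs := GenContFract.abs_dens_mul_sub_nums_succ_le hv n
  have hdet : (of v).nums n * (of v).dens (n + 1) - (of v).dens n * (of v).nums (n + 1) =
      (-1) ^ (n + 1) :=
    (SimpContFract.of v).determinant (GenContFract.not_terminatedAt_of_irrational hv n)
  obtain ⟨p', q', hp', hq'⟩ := GenContFract.exists_int_eq_nums_dens hv n
  obtain ⟨p, q, hp, hq⟩ := GenContFract.exists_int_eq_nums_dens hv (n + 1)
  simp only [hp', hq', hp, hq] at hsign habs hdet hkq ⊢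
  have hdetZ : p' * q - q' * p = (-1) ^ (n + 1) := by exact_mod_cast hdet
  have hq'0 : (0 : ℝ) ≤ q' := hq' ▸ GenContFract.zero_le_of_den
  have := abs_mul_sub_le_of_isUnit_det (α := v) (k := k) (l := round (k * v))
    (hdetZ ▸ isUnit_one.neg.pow _) (by exact_mod_cast hq'0) (by exact_mod_cast hk)
    (by exact_mod_cast hkq) hsign habs
  exact_mod_cast this

end ContFract

section AddCircle

variable {T : ℝ} [Fact (0 < T)]

lemma AddCircle.coe_image_eq_preimage_equivIoc {s : Set ℝ} {a : ℝ} (hs : s ⊆ Ioc a (a + T)) :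
    ((↑) : ℝ → AddCircle T) '' s = AddCircle.equivIoc T a ⁻¹' (Subtype.val ⁻¹' s) := by
  ext x
  constructor
  · rintro ⟨t, ht, rfl⟩
    simpa [AddCircle.equivIoc_coe_eq (hs ht)] using ht
  · exact fun hx => ⟨_, hx, AddCircle.coe_equivIoc⟩

lemma AddCircle.measurableSet_coe_image {s : Set ℝ} {a : ℝ} (hs : MeasurableSet s)
    (hsub : s ⊆ Ioc a (a + T)) : MeasurableSet (((↑) : ℝ → AddCircle T) '' s) := by
  rw [AddCircle.coe_image_eq_preimage_equivIoc hsub]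
  exact (AddCircle.measurePreserving_equivIoc T).measurable (measurable_subtype_coe hs)

lemma AddCircle.volume_coe_image {s : Set ℝ} {a : ℝ} (hs : MeasurableSet s)
    (hsub : s ⊆ Ioc a (a + T)) : volume (((↑) : ℝ → AddCircle T) '' s) = volume s := by
  rw [AddCircle.coe_image_eq_preimage_equivIoc hsub,
    (AddCircle.measurePreserving_equivIoc T).measure_preimage
      (measurable_subtype_coe hs).nullMeasurableSet,
    Measure.comap_apply _ Subtype.val_injective
      (fun _ h => MeasurableSet.subtype_image measurableSet_Ioc h) _ (measurable_subtype_coe hs),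
    Subtype.image_preimage_coe, inter_eq_right.mpr hsub]

end AddCircle

noncomputable def arc (c ℓ : ℝ) : Set (AddCircle (1 : ℝ)) :=
  ((↑) : ℝ → AddCircle (1 : ℝ)) '' Ico c (c + ℓ)

lemma Ico_subset_Ioc_sub_one {c ℓ : ℝ} (hℓ : ℓ < 1) :
    Ico c (c + ℓ) ⊆ Ioc (c + ℓ - 1) (c + ℓ - 1 + 1) :=
  fun _ ⟨h₁, h₂⟩ => ⟨by linarith, by linarith⟩

lemma measurableSet_arc {c ℓ : ℝ} (hℓ : ℓ < 1) : MeasurableSet (arc c ℓ) :=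
  AddCircle.measurableSet_coe_image measurableSet_Ico (Ico_subset_Ioc_sub_one hℓ)

lemma volume_arc {c ℓ : ℝ} (hℓ : ℓ < 1) : volume (arc c ℓ) = ENNReal.ofReal ℓ := by
  rw [arc, AddCircle.volume_coe_image measurableSet_Ico (Ico_subset_Ioc_sub_one hℓ),
    Real.volume_Ico, add_sub_cancel_left]

lemma image_add_arc (c ℓ a : ℝ) : (· + (a : AddCircle (1 : ℝ))) '' arc c ℓ = arc (c + a) ℓ := by
  rw [arc, arc, image_image]
  simp_rw [← AddCircle.coe_add]
  rw [← image_image (g := ((↑) : ℝ → AddCircle (1 : ℝ))) (f := (· + a)), image_add_const_Ico,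
    add_right_comm]

lemma disjoint_arc {c₁ c₂ ℓ : ℝ} (h : ℓ ≤ nrm (c₁ - c₂)) : Disjoint (arc c₁ ℓ) (arc c₂ ℓ) := by
  rw [Set.disjoint_left]
  rintro _ ⟨t₁, ⟨h₁, h₁'⟩, rfl⟩ ⟨t₂, ⟨h₂, h₂'⟩, ht⟩
  have : nrm (c₁ - c₂) = nrm ((c₁ - t₁) - (c₂ - t₂)) := by
    simp only [nrm, AddCircle.coe_sub, ht]
    abel_nf
  have hlt : |(c₁ - t₁) - (c₂ - t₂)| < ℓ := abs_lt.mpr ⟨by linarith, by linarith⟩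
  have := nrm_le_abs_sub_intCast ((c₁ - t₁) - (c₂ - t₂)) 0
  rw [Int.cast_zero, sub_zero] at this
  linarith

lemma Tas_image_prod_univ (α : ℝ) (q n : ℕ → ℕ) (s : ℕ) (S : Set (AddCircle (1 : ℝ))) :
    Tas α q n s '' (S ×ˢ univ) = ((· + (α : AddCircle (1 : ℝ))) '' S) ×ˢ univ := by
  ext ⟨y, j⟩
  constructor
  · rintro ⟨⟨x, k⟩, ⟨hx, -⟩, heq⟩
    exact ⟨⟨x, hx, congrArg Prod.fst heq⟩, trivial⟩
  · rintro ⟨⟨x, hx, rfl⟩, -⟩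
    exact ⟨(x, j - if x + (α : AddCircle (1 : ℝ)) ∈ Jas α q n s then 1 else 0), ⟨hx, trivial⟩,
      Prod.ext rfl (sub_add_cancel _ _)⟩

lemma Tas_iterate_image_arc (α : ℝ) (q n : ℕ → ℕ) (s : ℕ) (c ℓ : ℝ) (i : ℕ) :
    (Tas α q n s)^[i] '' (arc c ℓ ×ˢ univ) = arc (c + i * α) ℓ ×ˢ univ := by
  induction i with
  | zero => simp
  | succ i ih =>
    rw [Function.iterate_succ', image_comp, ih, Tas_image_prod_univ, image_add_arc]
    push_cast
    ring_nf

lemma lam2_prod_univ (S : Set (AddCircle (1 : ℝ))) : lam2 (S ×ˢ univ) = volume S := by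
  have hν : ((2 : ENNReal)⁻¹ • (Measure.dirac (0 : ZMod 2) + Measure.dirac (1 : ZMod 2)))
      univ = 1 := by
    simp [ENNReal.inv_two_add_inv_two]
  rw [lam2, Measure.prod_prod, hν, mul_one]

lemma lam2_biUnion_arc {α c ℓ : ℝ} {N : ℕ} (hℓ : ℓ < 1)
    (hsep : ∀ k : ℕ, 0 < k → k < N → ℓ ≤ nrm (k * α)) :
    lam2 (⋃ i ∈ Finset.range N, arc (c + i * α) ℓ ×ˢ (univ : Set (ZMod 2))) =
      ENNReal.ofReal (N * ℓ) := by
  have hdisj : ∀ i j, i < j → j < N → Disjoint (arc (c + i * α) ℓ) (arc (c + j * α) ℓ) := by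
    intro i j hij hj
    refine (disjoint_arc ?_).symm
    have : c + j * α - (c + i * α) = ((j - i : ℕ) : ℝ) * α := by push_cast [hij.le]; ring
    exact this ▸ hsep _ (by omega) (by omega)
  rw [measure_biUnion_finset,
    Finset.sum_congr rfl fun i _ => by rw [lam2_prod_univ, volume_arc hℓ], Finset.sum_const,
    Finset.card_range, nsmul_eq_mul, ENNReal.ofReal_mul (Nat.cast_nonneg _),
    ENNReal.ofReal_natCast]
  · intro i hi j hj hij
    rw [Finset.coe_range, mem_Iio] at hi hj
    refine Set.disjoint_prod.mpr (Or.inl ?_)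
    rcases lt_or_gt_of_ne hij with h | h
    · exact hdisj i j h hj
    · exact (hdisj j i h hi).symm
  · exact fun i _ => (measurableSet_arc hℓ).prod MeasurableSet.univ

lemma Aas_succ_eq_biUnion_arc (α : ℝ) (q n : ℕ → ℕ) (m : ℕ) :
    Aas α q n (m + 1) = ⋃ i ∈ Finset.range (q (n (m + 1))),
      arc (2 * ∑ s ∈ Finset.Icc 1 m, (q (n s) : ℝ) * α + i * α) (nrm (q (n (m + 1)) * α)) ×ˢ
        univ :=
  Set.iUnion₂_congr fun i _ => Tas_iterate_image_arc α q n m _ _ i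

lemma UVas_snd_eq_compl (α : ℝ) (q n : ℕ → ℕ) (m : ℕ) :
    (UVas α q n m).2 = (UVas α q n m).1ᶜ := by
  induction m with
  | zero =>
    ext ⟨x, j⟩
    simp only [UVas, mem_prod, mem_univ, true_and, mem_singleton_iff, mem_compl_iff]
    revert j; decide
  | succ m ih =>
    simp only [UVas, ih]
    ext p
    by_cases hU : p ∈ (UVas α q n m).1 <;> by_cases hA : p ∈ Aas α q n (m + 1) <;>
      simp [hU, hA]

lemma Uas_succ (α : ℝ) (q n : ℕ → ℕ) (m : ℕ) :
    Uas α q n (m + 1) = Uas α q n m ∆ Aas α q n (m + 1) := by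
  ext p
  simp only [Uas, UVas, UVas_snd_eq_compl, mem_symmDiff, mem_union, mem_sdiff, mem_inter_iff,
    mem_compl_iff]
  tauto

lemma Uas_succ_symmDiff (α : ℝ) (q n : ℕ → ℕ) (m : ℕ) :
    Uas α q n (m + 1) ∆ Uas α q n m = Aas α q n (m + 1) := by
  rw [Uas_succ, symmDiff_comm, symmDiff_symmDiff_cancel_left]

lemma one_div_add_two_lt_mul_lt_one_div {q₀ q₁ q₂ a e : ℝ} (hq₀ : 0 ≤ q₀) (hq₀₁ : q₀ ≤ q₁)
    (hq₁ : 0 < q₁) (hrec : q₂ = a * q₁ + q₀) (hgrow : q₀ + q₁ ≤ q₂)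
    (hlo : 1 / (q₂ + q₁) < e) (hhi : e < 1 / q₂) :
    1 / (a + 2) < q₁ * e ∧ q₁ * e < 1 / a := by
  have ha : 1 ≤ a := by nlinarith
  constructor
  · calc 1 / (a + 2) ≤ q₁ * (1 / (q₂ + q₁)) := by
          rw [mul_one_div, div_le_div_iff₀ (by linarith) (by linarith)]; nlinarith
      _ < q₁ * e := mul_lt_mul_of_pos_left hlo hq₁
  · calc q₁ * e < q₁ * (1 / q₂) := mul_lt_mul_of_pos_left hhi hq₁
      _ ≤ 1 / a := by rw [mul_one_div, div_le_div_iff₀ (by linarith) (by linarith)]; nlinarith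

theorem stmt11_general (α : ℝ) (hα : Irrational α) (q a : ℕ → ℕ)
    (hq : ∀ m, ((q m : ℝ)) = (GenContFract.of α).dens m)
    (hrec : ∀ m, q (m + 2) = a (m + 2) * q (m + 1) + q m)
    (n : ℕ → ℕ) (hmono : StrictMono n) :
    ∀ m : ℕ,
      (Uas α q n (m + 1)) ∆ (Uas α q n m) = Aas α q n (m + 1) ∧
      lam2 ((Uas α q n (m + 1)) ∆ (Uas α q n m)) =
        ENNReal.ofReal ((q (n (m + 1)) : ℝ) * nrm ((q (n (m + 1)) : ℝ) * α)) ∧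
      1 / ((a (n (m + 1) + 1) : ℝ) + 2) <
        (q (n (m + 1)) : ℝ) * nrm ((q (n (m + 1)) : ℝ) * α) ∧
      (q (n (m + 1)) : ℝ) * nrm ((q (n (m + 1)) : ℝ) * α) <
        1 / (a (n (m + 1) + 1) : ℝ) := by
  intro m
  obtain ⟨M, hM⟩ : ∃ M, n (m + 1) = M + 1 :=
    Nat.exists_eq_add_one.mpr ((Nat.zero_le _).trans_lt (hmono m.succ_pos))
  refine ⟨Uas_succ_symmDiff α q n m, ?_, ?_⟩
  · rw [Uas_succ_symmDiff, Aas_succ_eq_biUnion_arc, lam2_biUnion_arc]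
    · linarith [nrm_le_one_half ((q (n (m + 1)) : ℝ) * α)]
    · intro k hk hkq
      rw [hM] at hkq
      rw [hM, hq]
      exact nrm_dens_mul_le_nrm_mul hα M hk (by rw [← hq]; exact_mod_cast hkq)
  · have hrecR : (q (M + 2) : ℝ) = a (M + 2) * q (M + 1) + q M := by exact_mod_cast hrec M
    rw [hq, hq, hq] at hrecR
    rw [hM, hq, nrm_dens_mul_eq hα]
    exact one_div_add_two_lt_mul_lt_one_div GenContFract.zero_le_of_den
      GenContFract.of_den_mono (one_pos.trans_le (GenContFract.one_le_dens α _)) hrecR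
      (GenContFract.dens_add_dens_le hα M) (GenContFract.abs_dens_mul_sub_nums_bounds hα _).1
      (GenContFract.abs_dens_mul_sub_nums_bounds hα _).2

theorem stmt11 (α : ℝ) (hα : Irrational α) (q a : ℕ → ℕ)
    (hq : ∀ m, ((q m : ℝ)) = (GenContFract.of α).dens m)
    (hq0 : q 0 = 1) (hq1 : q 1 = a 1)
    (hrec : ∀ m, q (m + 2) = a (m + 2) * q (m + 1) + q m)
    (n : ℕ → ℕ) (hmono : StrictMono n) (heven : ∀ k, Even (n k)) :
    ∀ m : ℕ,
      (Uas α q n (m + 1)) ∆ (Uas α q n m) = Aas α q n (m + 1) ∧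
      lam2 ((Uas α q n (m + 1)) ∆ (Uas α q n m)) =
        ENNReal.ofReal ((q (n (m + 1)) : ℝ) * nrm ((q (n (m + 1)) : ℝ) * α)) ∧
      1 / ((a (n (m + 1) + 1) : ℝ) + 2) <
        (q (n (m + 1)) : ℝ) * nrm ((q (n (m + 1)) : ℝ) * α) ∧
      (q (n (m + 1)) : ℝ) * nrm ((q (n (m + 1)) : ℝ) * α) <
        1 / (a (n (m + 1) + 1) : ℝ) :=
  stmt11_general α hα q a hq hrec n hmono
end
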